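/- For the TFG, the adjoint of an exponential satisfies Ad_{exp_TFG(ξ)} equal to the block matrix with diagonal blocks R = exp((ξ^R)×) and first block column (R; (ν(ξ^R)ξ^v)× R; (ν(ξ^R)ξ^p)× R; (ν(ξ^R)ξ^b)× R), where ν is the left Jacobian of SO(3). -/

import Mathlib

open Matrix

noncomputable section

abbrev V3 := Fin 3 → ℝ
abbrev M3 := Matrix (Fin 3) (Fin 3) ℝ

/-- The skew-symmetric cross-product matrix `(ξ)×`. -/
def skew (ξ : V3) : M3 :=
  !![0, -ξ 2, ξ 1; ξ 2, 0, -ξ 0; -ξ 1, ξ 0, 0]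

/-- The Euclidean norm of a vector of `ℝ³`. -/
def nrm (ξ : V3) : ℝ := Real.sqrt (ξ 0 ^ 2 + ξ 1 ^ 2 + ξ 2 ^ 2)

/-- The left Jacobian of SO(3):
`ν(ξ) = I + ((1−cos‖ξ‖)/‖ξ‖²)(ξ)× + ((‖ξ‖−sin‖ξ‖)/‖ξ‖³)(ξ)ײ`. -/
def nu (ξ : V3) : M3 :=
  1 + ((1 - Real.cos (nrm ξ)) / nrm ξ ^ 2) • skew ξ
    + ((nrm ξ - Real.sin (nrm ξ)) / nrm ξ ^ 3) • (skew ξ * skew ξ)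

/-- `R` is a rotation matrix: orthogonal with determinant one. -/
def IsSO3 (R : M3) : Prop := R * Rᵀ = 1 ∧ R.det = 1

/-- An element of the Two-Frames Group: `(R, v, p, b)`. -/
abbrev TFGel := M3 × V3 × V3 × V3

/-- The TFG composition law. -/
def tmul (x y : TFGel) : TFGel :=
  (x.1 * y.1, x.2.1 + x.1 *ᵥ y.2.1, x.2.2.1 + x.1 *ᵥ y.2.2.1,
    y.2.2.2 + y.1ᵀ *ᵥ x.2.2.2)

/-- The adjoint of `(R,v,p,b)`, as the action on `ℝ¹² = ℝ³ × ℝ³ × ℝ³ × ℝ³` of the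
block matrix with diagonal blocks `R` and first block column
`(R; (v)× R; (p)× R; R (b)×)`, all other blocks zero. -/
def adAct (x : TFGel) (ξ : V3 × V3 × V3 × V3) : V3 × V3 × V3 × V3 :=
  (x.1 *ᵥ ξ.1,
    skew x.2.1 *ᵥ (x.1 *ᵥ ξ.1) + x.1 *ᵥ ξ.2.1,
    skew x.2.2.1 *ᵥ (x.1 *ᵥ ξ.1) + x.1 *ᵥ ξ.2.2.1,
    x.1 *ᵥ (skew x.2.2.2 *ᵥ ξ.1) + x.1 *ᵥ ξ.2.2.2)

/-- The candidate TFG exponential: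
`exp_TFG(ξ^R, ξ^v, ξ^p, ξ^b) = (exp((ξ^R)×), ν(ξ^R)ξ^v, ν(ξ^R)ξ^p, ν(−ξ^R)ξ^b)`. -/
def expTFG (ξ : V3 × V3 × V3 × V3) : TFGel :=
  (NormedSpace.exp (skew ξ.1), nu ξ.1 *ᵥ ξ.2.1, nu ξ.1 *ᵥ ξ.2.2.1,
    nu (-ξ.1) *ᵥ ξ.2.2.2)

/-! The first three block rows agree by definition. For the last one, with `R = exp((ξ^R)×)`,
two facts suffice. First `R ν(-ξ^R) = ν(ξ^R)`, since formally `ν(ξ) = (e^{(ξ)×} - 1)/(ξ)×`; it is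
checked on the Rodrigues form `R = 1 + (sin θ/θ)(ξ^R)× + ((1 - cos θ)/θ²)(ξ^R)ײ`, `θ = ‖ξ^R‖`,
which comes from splitting the exponential series into even and odd parts, using
`((ξ^R)×)³ = -θ² (ξ^R)×`. Second, `R` is a rotation (orthogonal, with determinant `±1` equal to
`det(exp((ξ^R)×/2))²`), and
rotations preserve cross products: `Mᵀ (M x)× M = det M · (x)×` for every `M`. -/

open Nat NormedSpace

section PowThree

variable {𝕜 𝔸 : Type*} [CommSemiring 𝕜] [Semiring 𝔸] [Algebra 𝕜 𝔸] {A : 𝔸} {c : 𝕜}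

theorem pow_two_mul_add_one_of_pow_three_eq_smul (hA : A ^ 3 = c • A) (n : ℕ) :
    A ^ (2 * n + 1) = c ^ n • A := by
  induction n with
  | zero => simp
  | succ n ih =>
    rw [show 2 * (n + 1) + 1 = 2 * n + 1 + 2 by ring, pow_add, ih, smul_mul_assoc,
      ← pow_succ' A 2, hA, smul_smul, pow_succ]

theorem pow_two_mul_add_two_of_pow_three_eq_smul (hA : A ^ 3 = c • A) (n : ℕ) :
    A ^ (2 * n + 2) = c ^ n • A ^ 2 := by
  rw [pow_succ, pow_two_mul_add_one_of_pow_three_eq_smul hA, smul_mul_assoc, ← sq]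

end PowThree

theorem exp_eq_of_pow_three_eq_neg_sq_smul {𝔸 : Type*} [NormedRing 𝔸] [NormedAlgebra ℝ 𝔸]
    [CompleteSpace 𝔸] {A : 𝔸} {θ : ℝ} (hθ : θ ≠ 0) (hA : A ^ 3 = (-θ ^ 2) • A) :
    exp A = 1 + (Real.sin θ / θ) • A + ((1 - Real.cos θ) / θ ^ 2) • A ^ 2 := by
  have hodd : HasSum (fun n => ((2 * n + 1)! : ℝ)⁻¹ • A ^ (2 * n + 1))
      ((Real.sin θ / θ) • A) := by
    refine (((Real.hasSum_sin θ).div_const θ).smul_const A).congr_fun fun n => ?_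
    rw [pow_two_mul_add_one_of_pow_three_eq_smul hA, smul_smul, neg_pow, ← pow_mul]
    congr 1
    field_simp
    ring
  have hcos := ((hasSum_nat_add_iff' 1).mpr (Real.hasSum_cos θ)).div_const (-θ ^ 2)
  have hcos_val : (Real.cos θ - ∑ i ∈ Finset.range 1, (-1) ^ i * θ ^ (2 * i) / ((2 * i)! : ℝ))
      / -θ ^ 2 = (1 - Real.cos θ) / θ ^ 2 := by
    simp only [Finset.sum_range_one]
    field_simp
    ring
  rw [hcos_val] at hcos
  have heven_succ : HasSum (fun n => ((2 * (n + 1))! : ℝ)⁻¹ • A ^ (2 * (n + 1)))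
      (((1 - Real.cos θ) / θ ^ 2) • A ^ 2) := by
    refine (hcos.smul_const (A ^ 2)).congr_fun fun n => ?_
    rw [mul_add_one, pow_two_mul_add_two_of_pow_three_eq_smul hA, smul_smul, neg_pow, ← pow_mul]
    congr 1
    field_simp
    ring
  have heven : HasSum (fun n => ((2 * n)! : ℝ)⁻¹ • A ^ (2 * n))
      (((1 - Real.cos θ) / θ ^ 2) • A ^ 2 + 1) := by
    refine (hasSum_nat_add_iff' 1).mp ?_
    simpa using heven_succ
  rw [(exp_series_hasSum_exp' (𝕂 := ℝ) A).unique (heven.even_add_odd hodd)]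
  abel

theorem Matrix.exp_mul_transpose_of_transpose_eq_neg {m : Type*} [Fintype m] [DecidableEq m]
    {A : Matrix m m ℝ} (hA : Aᵀ = -A) : exp A * (exp A)ᵀ = 1 := by
  rw [← Matrix.exp_transpose, hA, ← Matrix.exp_add_of_commute _ _ (Commute.refl A).neg_right,
    add_neg_cancel, exp_zero]

theorem Matrix.det_exp_nonneg {m : Type*} [Fintype m] [DecidableEq m] (A : Matrix m m ℝ) :
    0 ≤ (exp A).det := by
  have h : A = 2 • ((2 : ℝ)⁻¹ • A) := by rw [two_nsmul, ← add_smul]; norm_num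
  rw [h, Matrix.exp_nsmul, Matrix.det_pow]
  exact sq_nonneg _

lemma nrm_neg (a : V3) : nrm (-a) = nrm a := by
  simp [nrm]

lemma skew_neg (a : V3) : skew (-a) = -skew a := by
  ext i j
  fin_cases i <;> fin_cases j <;> simp [skew]

lemma skew_transpose (a : V3) : (skew a)ᵀ = -skew a := by
  ext i j
  fin_cases i <;> fin_cases j <;> simp [skew]

lemma skew_pow_three (a : V3) : skew a ^ 3 = (-nrm a ^ 2) • skew a := by
  rw [nrm, Real.sq_sqrt (by positivity)]
  ext i j
  fin_cases i <;> fin_cases j <;>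
    simp [skew, pow_succ, Matrix.mul_apply, Fin.sum_univ_three] <;> ring

lemma skew_eq_zero_of_nrm_eq_zero {a : V3} (h : nrm a = 0) : skew a = 0 := by
  rw [nrm, Real.sqrt_eq_zero (by positivity)] at h
  have h0 : a 0 = 0 := by nlinarith
  have h1 : a 1 = 0 := by nlinarith
  have h2 : a 2 = 0 := by nlinarith
  ext i j
  fin_cases i <;> fin_cases j <;> simp [skew, h0, h1, h2]

lemma transpose_mul_skew_mulVec_mul (M : M3) (x : V3) :
    Mᵀ * skew (M *ᵥ x) * M = M.det • skew x := by
  ext i j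
  fin_cases i <;> fin_cases j <;>
    simp [skew, Matrix.mul_apply, Matrix.mulVec, Fin.sum_univ_three, Matrix.det_fin_three,
      dotProduct] <;> ring

lemma IsSO3.skew_mulVec_mul {R : M3} (hR : IsSO3 R) (x : V3) :
    skew (R *ᵥ x) * R = R * skew x := by
  calc skew (R *ᵥ x) * R = R * (Rᵀ * skew (R *ᵥ x) * R) := by
        rw [Matrix.mul_assoc, ← Matrix.mul_assoc R, hR.1, Matrix.one_mul]
    _ = R * skew x := by rw [transpose_mul_skew_mulVec_mul, hR.2, one_smul]

lemma IsSO3.mulVec_skew_mulVec {R : M3} (hR : IsSO3 R) (y z : V3) :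
    R *ᵥ (skew y *ᵥ z) = skew (R *ᵥ y) *ᵥ (R *ᵥ z) := by
  rw [Matrix.mulVec_mulVec, Matrix.mulVec_mulVec, hR.skew_mulVec_mul]

theorem isSO3_exp_skew (a : V3) : IsSO3 (exp (skew a)) := by
  have horth := Matrix.exp_mul_transpose_of_transpose_eq_neg (skew_transpose a)
  refine ⟨horth, ?_⟩
  have hsq : (exp (skew a)).det ^ 2 = 1 := by
    simpa [sq, Matrix.det_mul] using congrArg Matrix.det horth
  nlinarith [Matrix.det_exp_nonneg (skew a)]

theorem exp_skew (a : V3) :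
    exp (skew a) = 1 + (Real.sin (nrm a) / nrm a) • skew a
      + ((1 - Real.cos (nrm a)) / nrm a ^ 2) • skew a ^ 2 := by
  rcases eq_or_ne (nrm a) 0 with h | h
  · simp [skew_eq_zero_of_nrm_eq_zero h]
  · exact open scoped Norms.Operator in exp_eq_of_pow_three_eq_neg_sq_smul h (skew_pow_three a)

theorem exp_skew_mul_nu_neg (a : V3) : exp (skew a) * nu (-a) = nu a := by
  rcases eq_or_ne (nrm a) 0 with h | h
  · simp [nu, skew_neg, skew_eq_zero_of_nrm_eq_zero h]
  rw [exp_skew, nu, nu, nrm_neg, skew_neg, neg_mul_neg, sq (skew a)]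
  set θ := nrm a
  set S := skew a
  have h3 : S * (S * S) = (-θ ^ 2) • S := (pow_three S).symm.trans (skew_pow_three a)
  have h3' : S * S * S = (-θ ^ 2) • S := by rw [mul_assoc, h3]
  have h4 : S * S * (S * S) = (-θ ^ 2) • (S * S) := by rw [← mul_assoc, h3', smul_mul_assoc]
  simp only [mul_add, add_mul, mul_neg, one_mul, mul_one, smul_mul_assoc,
    mul_smul_comm, smul_smul, h3, h3', h4]
  match_scalars
  · ring
  · field_simp
    linear_combination Real.sin_sq_add_cos_sq θ
  · field_simp
    ring

/-- The adjoint of a TFG exponential: `Ad_{exp_TFG(ξ)}` is the block matrix with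
diagonal blocks `R = exp((ξ^R)×)` and first block column
`(R; (ν(ξ^R)ξ^v)× R; (ν(ξ^R)ξ^p)× R; (ν(ξ^R)ξ^b)× R)`. -/
theorem adAct_expTFG (ξ : V3 × V3 × V3 × V3) :
    adAct (expTFG ξ) = fun ζ : V3 × V3 × V3 × V3 =>
      (NormedSpace.exp (skew ξ.1) *ᵥ ζ.1,
        skew (nu ξ.1 *ᵥ ξ.2.1) *ᵥ (NormedSpace.exp (skew ξ.1) *ᵥ ζ.1) +
          NormedSpace.exp (skew ξ.1) *ᵥ ζ.2.1,
        skew (nu ξ.1 *ᵥ ξ.2.2.1) *ᵥ (NormedSpace.exp (skew ξ.1) *ᵥ ζ.1) +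
          NormedSpace.exp (skew ξ.1) *ᵥ ζ.2.2.1,
        skew (nu ξ.1 *ᵥ ξ.2.2.2) *ᵥ (NormedSpace.exp (skew ξ.1) *ᵥ ζ.1) +
          NormedSpace.exp (skew ξ.1) *ᵥ ζ.2.2.2) := by
  funext ζ
  set R := exp (skew ξ.1)
  have hb : nu ξ.1 *ᵥ ξ.2.2.2 = R *ᵥ (nu (-ξ.1) *ᵥ ξ.2.2.2) := by
    rw [Matrix.mulVec_mulVec, exp_skew_mul_nu_neg]
  refine Prod.ext rfl (Prod.ext rfl (Prod.ext rfl ?_))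
  change R *ᵥ (skew (nu (-ξ.1) *ᵥ ξ.2.2.2) *ᵥ ζ.1) + R *ᵥ ζ.2.2.2
    = skew (nu ξ.1 *ᵥ ξ.2.2.2) *ᵥ (R *ᵥ ζ.1) + R *ᵥ ζ.2.2.2
  rw [hb, (isSO3_exp_skew ξ.1).mulVec_skew_mulVec]
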